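/- arXiv:2412.18498 — 3 statements merged into one kernel-verified Lean document; each statement's English description precedes it below -/
import Mathlib

section
/- For every T > 0 and every continuous K : Δ_T → ℝ there exists a unique continuous resolvent kernel R : Δ_T → ℝ satisfying R(s,τ) = K(s,τ) + ∫_s^τ K(s,η) R(η,τ) dη for all (s,τ) ∈ Δ_T; moreover, for every continuous Θ : [0,T] → ℝ the function A(s) := Θ(s) + ∫_s^T R(s,τ) Θ(τ) dτ is continuous and satisfies A(s) = Θ(s) + ∫_s^T K(s,τ) A(τ) dτ for every s ∈ [0,T]. -/
/-!
Extending kernels from the triangle `0 ≤ s ≤ τ ≤ T` to the plane through a continuous retraction,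
the resolvent equation `R = K + ∫ K R` becomes a fixed-point equation on bounded continuous
functions on `ℝ × ℝ`. The `n`-th iterate of this map is Lipschitz with constant `(‖K‖ T)ⁿ / n!`,
so some iterate is a contraction and the Banach fixed-point theorem gives a unique resolvent.
The Volterra equation for `A = Θ + ∫ R Θ` then follows by substituting the resolvent equation
and exchanging the order of integration over the triangle `s ≤ η ≤ τ ≤ T`.
-/

open MeasureTheory Set intervalIntegral
open scoped BoundedContinuousFunction

theorem continuous_intervalIntegral_of_continuous {X E : Type*} [TopologicalSpace X]
    [NormedAddCommGroup E] [NormedSpace ℝ E] {F : X → ℝ → E} (hF : Continuous F.uncurry)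
    {a b : X → ℝ} (ha : Continuous a) (hb : Continuous b) :
    Continuous fun x => ∫ t in a x..b x, F x t := by
  have hint : ∀ x c d, IntervalIntegrable (F x) volume c d := fun x c d =>
    (hF.uncurry_left x).intervalIntegrable c d
  have hsplit : (fun x => ∫ t in a x..b x, F x t) =
      fun x => (∫ t in (0 : ℝ)..b x, F x t) - ∫ t in (0 : ℝ)..a x, F x t := by
    funext x
    exact (integral_interval_sub_left (hint x 0 _) (hint x 0 _)).symm
  rw [hsplit]
  exact (continuous_parametric_intervalIntegral_of_continuous hF hb).sub
    (continuous_parametric_intervalIntegral_of_continuous hF ha)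

theorem integral_sub_pow_div_factorial (s τ : ℝ) (n : ℕ) :
    ∫ η in s..τ, (τ - η) ^ n / n.factorial = (τ - s) ^ (n + 1) / (n + 1).factorial := by
  rw [intervalIntegral.integral_div, intervalIntegral.integral_comp_sub_left (· ^ n) τ,
    sub_self, integral_pow, Nat.factorial_succ]
  push_cast
  field_simp
  ring

theorem integral_integral_triangle_swap {E : Type*} [NormedAddCommGroup E] [NormedSpace ℝ E]
    {G : ℝ → ℝ → E} (hG : Continuous G.uncurry) {a b : ℝ} (hab : a ≤ b) :
    ∫ τ in a..b, ∫ η in a..τ, G η τ = ∫ η in a..b, ∫ τ in η..b, G η τ := by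
  set F : ℝ → ℝ → E := fun η τ => {p : ℝ × ℝ | p.1 ≤ p.2}.indicator G.uncurry (η, τ)
  have hF : Integrable F.uncurry
      ((volume.restrict (Icc a b)).prod (volume.restrict (Icc a b))) := by
    rw [Measure.prod_restrict, ← Measure.volume_eq_prod]
    exact (hG.continuousOn.integrableOn_compact (isCompact_Icc.prod isCompact_Icc)).indicator
      (measurableSet_le measurable_fst measurable_snd)
  have h_left : ∀ τ ∈ Icc a b, ∫ η in Icc a b, F η τ = ∫ η in a..τ, G η τ := fun τ hτ => by
    have : (F · τ) = (Iic τ).indicator (G · τ) := by ext η; simp [F, indicator_apply]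
    have hset : Icc a b ∩ Iic τ = Icc a τ := by
      ext; simp only [mem_inter_iff, mem_Icc, mem_Iic]; grind
    rw [this, setIntegral_indicator measurableSet_Iic, hset, integral_Icc_eq_integral_Ioc,
      integral_of_le hτ.1]
  have h_right : ∀ η ∈ Icc a b, ∫ τ in Icc a b, F η τ = ∫ τ in η..b, G η τ := fun η hη => by
    have : F η = (Ici η).indicator (G η) := by ext τ; simp [F, indicator_apply]
    have hset : Icc a b ∩ Ici η = Icc η b := by
      ext; simp only [mem_inter_iff, mem_Icc, mem_Ici]; grind
    rw [this, setIntegral_indicator measurableSet_Ici, hset, integral_Icc_eq_integral_Ioc,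
      integral_of_le hη.2]
  calc ∫ τ in a..b, ∫ η in a..τ, G η τ
      = ∫ τ in Icc a b, ∫ η in Icc a b, F η τ := by
        rw [integral_of_le hab, ← integral_Icc_eq_integral_Ioc]
        exact (setIntegral_congr_fun measurableSet_Icc h_left).symm
    _ = ∫ η in Icc a b, ∫ τ in Icc a b, F η τ := (integral_integral_swap hF).symm
    _ = ∫ η in a..b, ∫ τ in η..b, G η τ := by
        rw [integral_of_le hab, ← integral_Icc_eq_integral_Ioc]
        exact setIntegral_congr_fun measurableSet_Icc h_right

theorem integral_mul_congr_of_eqOn {a b τ : ℝ} {r θ Θ : ℝ → ℝ} (h : EqOn θ Θ (Icc a b))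
    (hτ : τ ∈ Icc a b) : ∫ x in τ..b, r x * θ x = ∫ x in τ..b, r x * Θ x :=
  integral_congr fun x hx => by
    rw [uIcc_of_le hτ.2] at hx
    rw [h ⟨hτ.1.trans hx.1, hx.2⟩]

theorem exists_continuous_eqOn_Icc {a b : ℝ} (hab : a ≤ b) {Θ : ℝ → ℝ}
    (hΘ : ContinuousOn Θ (Icc a b)) : ∃ θ : ℝ → ℝ, Continuous θ ∧ EqOn θ Θ (Icc a b) :=
  ⟨IccExtend hab ((Icc a b).domRestrict Θ), hΘ.domRestrict.Icc_extend',
    fun _ ht => IccExtend_of_mem hab _ ht⟩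

def volterraTriangle (T : ℝ) : Set (ℝ × ℝ) := {p | 0 ≤ p.1 ∧ p.1 ≤ p.2 ∧ p.2 ≤ T}

def triangleRetraction (T : ℝ) (p : ℝ × ℝ) : ℝ × ℝ :=
  (max 0 (min p.1 (max 0 (min p.2 T))), max 0 (min p.2 T))

section Triangle

variable {T : ℝ}

theorem isCompact_volterraTriangle (T : ℝ) : IsCompact (volterraTriangle T) := by
  refine ((isCompact_Icc (a := 0) (b := T)).prod
    (isCompact_Icc (a := 0) (b := T))).of_isClosed_subset ?_ ?_
  · exact (isClosed_le continuous_const continuous_fst).inter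
      ((isClosed_le continuous_fst continuous_snd).inter
        (isClosed_le continuous_snd continuous_const))
  · rintro ⟨s, τ⟩ ⟨h0s, hsτ, hτT⟩
    exact ⟨⟨h0s, hsτ.trans hτT⟩, ⟨h0s.trans hsτ, hτT⟩⟩

theorem continuous_triangleRetraction (T : ℝ) : Continuous (triangleRetraction T) := by
  unfold triangleRetraction
  fun_prop

theorem triangleRetraction_mem (hT : 0 ≤ T) (p : ℝ × ℝ) :
    triangleRetraction T p ∈ volterraTriangle T :=
  ⟨le_max_left _ _, max_le (le_max_left _ _) (min_le_right _ _), max_le hT (min_le_right _ _)⟩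

theorem triangleRetraction_of_mem {p : ℝ × ℝ} (hp : p ∈ volterraTriangle T) :
    triangleRetraction T p = p := by
  obtain ⟨h0s, hsτ, hτT⟩ := hp
  have hτ : max 0 (min p.2 T) = p.2 := by rw [min_eq_left hτT, max_eq_right (h0s.trans hsτ)]
  simp only [triangleRetraction, hτ, min_eq_left hsτ, max_eq_right h0s]

def triangleExtend (hT : 0 ≤ T) {F : ℝ × ℝ → ℝ} (hF : ContinuousOn F (volterraTriangle T)) :
    (ℝ × ℝ) →ᵇ ℝ where
  toFun := F ∘ triangleRetraction T
  continuous_toFun :=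
    hF.comp_continuous (continuous_triangleRetraction T) (triangleRetraction_mem hT)
  map_bounded' := Metric.isBounded_range_iff.1 <|
    ((isCompact_volterraTriangle T).image_of_continuousOn hF).isBounded.subset <| by
      rintro _ ⟨p, rfl⟩
      exact mem_image_of_mem F (triangleRetraction_mem hT p)

theorem triangleExtend_eqOn (hT : 0 ≤ T) {F : ℝ × ℝ → ℝ}
    (hF : ContinuousOn F (volterraTriangle T)) :
    EqOn (triangleExtend hT hF) F (volterraTriangle T) :=
  fun _ hp => congrArg F (triangleRetraction_of_mem hp)

end Triangle

noncomputable def resolventRHS (k f : ℝ × ℝ → ℝ) (q : ℝ × ℝ) : ℝ :=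
  k q + ∫ η in q.1..q.2, k (q.1, η) * f (η, q.2)

section ResolventRHS

variable {k f g : ℝ × ℝ → ℝ}

theorem continuous_resolventRHS (hk : Continuous k) (hf : Continuous f) :
    Continuous (resolventRHS k f) :=
  hk.add <| continuous_intervalIntegral_of_continuous
    (F := fun q η => k (q.1, η) * f (η, q.2)) (by fun_prop) continuous_fst continuous_snd

theorem resolventRHS_congr {T : ℝ} {k' f' : ℝ × ℝ → ℝ} (hk : EqOn k k' (volterraTriangle T))
    (hf : EqOn f f' (volterraTriangle T)) {q : ℝ × ℝ} (hq : q ∈ volterraTriangle T) :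
    resolventRHS k f q = resolventRHS k' f' q := by
  refine congrArg₂ (· + ·) (hk hq) (integral_congr fun η hη => ?_)
  obtain ⟨h0s, hsτ, hτT⟩ := hq
  rw [uIcc_of_le hsτ] at hη
  rw [hk (x := (q.1, η)) ⟨h0s, hη.1, hη.2.trans hτT⟩,
    hf (x := (η, q.2)) ⟨h0s.trans hη.1, hη.2, hτT⟩]

theorem norm_resolventRHS_le {T : ℝ} (k f : (ℝ × ℝ) →ᵇ ℝ) {q : ℝ × ℝ}
    (hq : q ∈ volterraTriangle T) : ‖resolventRHS k f q‖ ≤ ‖k‖ + ‖k‖ * ‖f‖ * T := by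
  obtain ⟨h0s, hsτ, hτT⟩ := hq
  have hint : ‖∫ η in q.1..q.2, k (q.1, η) * f (η, q.2)‖ ≤ ‖k‖ * ‖f‖ * |q.2 - q.1| :=
    norm_integral_le_of_norm_le_const fun η _ => by
      rw [norm_mul]
      exact mul_le_mul (k.norm_coe_le_norm _) (f.norm_coe_le_norm _) (norm_nonneg _)
        (norm_nonneg _)
  calc ‖resolventRHS k f q‖ ≤ ‖k q‖ + ‖∫ η in q.1..q.2, k (q.1, η) * f (η, q.2)‖ :=
        norm_add_le _ _
    _ ≤ ‖k‖ + ‖k‖ * ‖f‖ * T := by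
      rw [abs_of_nonneg (sub_nonneg.2 hsτ)] at hint
      gcongr
      · exact k.norm_coe_le_norm q
      · exact hint.trans (by gcongr; linarith)

theorem abs_resolventRHS_sub_le (hk : Continuous k) (hf : Continuous f) (hg : Continuous g)
    {M c : ℝ} (hM : ∀ p, |k p| ≤ M) {n : ℕ} {q : ℝ × ℝ} (hq : q.1 ≤ q.2)
    (hfg : ∀ η ∈ Ioc q.1 q.2, |f (η, q.2) - g (η, q.2)| ≤ c * (q.2 - η) ^ n / n.factorial) :
    |resolventRHS k f q - resolventRHS k g q| ≤
      M * c * (q.2 - q.1) ^ (n + 1) / (n + 1).factorial := by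
  have hint : ∀ h : ℝ × ℝ → ℝ, Continuous h →
      IntervalIntegrable (fun η => k (q.1, η) * h (η, q.2)) volume q.1 q.2 :=
    fun h hh => Continuous.intervalIntegrable (by fun_prop) _ _
  have hdiff : resolventRHS k f q - resolventRHS k g q =
      ∫ η in q.1..q.2, k (q.1, η) * (f (η, q.2) - g (η, q.2)) := by
    simp only [resolventRHS, add_sub_add_left_eq_sub, ← integral_sub (hint f hf) (hint g hg),
      mul_sub]
  rw [hdiff, ← Real.norm_eq_abs, mul_div_assoc, ← integral_sub_pow_div_factorial,
    ← intervalIntegral.integral_const_mul]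
  refine norm_integral_le_of_norm_le hq (Filter.Eventually.of_forall fun η hη => ?_)
    (Continuous.intervalIntegrable (by fun_prop) _ _)
  rw [norm_mul, Real.norm_eq_abs, Real.norm_eq_abs, mul_assoc, mul_div_assoc']
  exact mul_le_mul (hM _) (hfg η hη) (abs_nonneg _) ((abs_nonneg _).trans (hM q))

end ResolventRHS

/-- Evaluating at `triangleRetraction T p` keeps the operator on bounded continuous functions on
the plane while making it depend only on values on the triangle. -/
noncomputable def resolventOp {T : ℝ} (hT : 0 ≤ T) (k f : (ℝ × ℝ) →ᵇ ℝ) : (ℝ × ℝ) →ᵇ ℝ :=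
  .ofNormedAddCommGroup (resolventRHS k f ∘ triangleRetraction T)
    ((continuous_resolventRHS k.continuous f.continuous).comp (continuous_triangleRetraction T))
    (‖k‖ + ‖k‖ * ‖f‖ * T) fun p => norm_resolventRHS_le k f (triangleRetraction_mem hT p)

section ResolventOp

variable {T : ℝ} (hT : 0 ≤ T) (k : (ℝ × ℝ) →ᵇ ℝ)

theorem resolventOp_apply (f : (ℝ × ℝ) →ᵇ ℝ) (p : ℝ × ℝ) :
    resolventOp hT k f p = resolventRHS k f (triangleRetraction T p) := rfl

theorem abs_resolventOp_iterate_sub_le (n : ℕ) (f g : (ℝ × ℝ) →ᵇ ℝ) (p : ℝ × ℝ) :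
    |(resolventOp hT k)^[n] f p - (resolventOp hT k)^[n] g p| ≤
      dist f g * ‖k‖ ^ n * ((triangleRetraction T p).2 - (triangleRetraction T p).1) ^ n /
        n.factorial := by
  induction n generalizing p with
  | zero =>
    simpa [← Real.dist_eq] using BoundedContinuousFunction.dist_coe_le_dist (f := f) (g := g) p
  | succ n ih =>
    set q := triangleRetraction T p
    have hq := triangleRetraction_mem hT p
    rw [Function.iterate_succ_apply', Function.iterate_succ_apply', resolventOp_apply,
      resolventOp_apply]
    refine (abs_resolventRHS_sub_le (c := dist f g * ‖k‖ ^ n) k.continuous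
      (BoundedContinuousFunction.continuous _) (BoundedContinuousFunction.continuous _)
      (fun p => k.norm_coe_le_norm p) hq.2.1 fun η hη => ?_).trans_eq (by ring)
    simpa only [triangleRetraction_of_mem (T := T) (p := (η, q.2))
      ⟨hq.1.trans hη.1.le, hη.2, hq.2.2⟩] using ih (η, q.2)

theorem lipschitzWith_resolventOp_iterate (n : ℕ) :
    LipschitzWith ((‖k‖ * T) ^ n / n.factorial).toNNReal (resolventOp hT k)^[n] := by
  refine LipschitzWith.of_dist_le_mul fun f g => ?_
  rw [Real.coe_toNNReal _ (by positivity)]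
  refine (BoundedContinuousFunction.dist_le (by positivity)).2 fun p => ?_
  obtain ⟨h0s, hsτ, hτT⟩ := triangleRetraction_mem hT p
  refine (abs_resolventOp_iterate_sub_le hT k n f g p).trans ?_
  calc dist f g * ‖k‖ ^ n * ((triangleRetraction T p).2 - (triangleRetraction T p).1) ^ n /
        n.factorial ≤ dist f g * ‖k‖ ^ n * T ^ n / n.factorial := by
        gcongr
        linarith
    _ = (‖k‖ * T) ^ n / n.factorial * dist f g := by ring

theorem existsUnique_isFixedPt_resolventOp :
    ∃! ρ, Function.IsFixedPt (resolventOp hT k) ρ := by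
  obtain ⟨n, hn⟩ : ∃ n : ℕ, (‖k‖ * T) ^ n / n.factorial < 1 :=
    ((FloorSemiring.tendsto_pow_div_factorial_atTop _).eventually (gt_mem_nhds one_pos)).exists
  have hC : ContractingWith _ (resolventOp hT k)^[n] :=
    ⟨Real.toNNReal_lt_one.2 hn, lipschitzWith_resolventOp_iterate hT k n⟩
  exact ⟨_, hC.isFixedPt_fixedPoint_iterate, fun ρ hρ => hC.fixedPoint_unique (hρ.iterate n)⟩

end ResolventOp

theorem exists_resolvent_kernel {T : ℝ} (hT : 0 ≤ T) {K : ℝ × ℝ → ℝ}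
    (hK : ContinuousOn K (volterraTriangle T)) :
    ∃ R : ℝ × ℝ → ℝ, Continuous R ∧ (∀ q ∈ volterraTriangle T, R q = resolventRHS K R q) ∧
      ∀ R' : ℝ × ℝ → ℝ, ContinuousOn R' (volterraTriangle T) →
        (∀ q ∈ volterraTriangle T, R' q = resolventRHS K R' q) →
          EqOn R R' (volterraTriangle T) := by
  have hkK := triangleExtend_eqOn hT hK
  obtain ⟨ρ, hρ, hρ_unique⟩ := existsUnique_isFixedPt_resolventOp hT (triangleExtend hT hK)
  refine ⟨ρ, ρ.continuous, fun q hq => ?_, fun R' hR'c hR' => ?_⟩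
  · calc ρ q = resolventOp hT (triangleExtend hT hK) ρ q := by rw [hρ.eq]
      _ = resolventRHS (triangleExtend hT hK) ρ q := by
        rw [resolventOp_apply, triangleRetraction_of_mem hq]
      _ = resolventRHS K ρ q := resolventRHS_congr hkK (fun _ _ => rfl) hq
  · have hR'_fixed : Function.IsFixedPt (resolventOp hT (triangleExtend hT hK))
        (triangleExtend hT hR'c) := by
      ext p
      have hp := triangleRetraction_mem hT p
      calc resolventOp hT (triangleExtend hT hK) (triangleExtend hT hR'c) p
          = resolventRHS K R' (triangleRetraction T p) :=
            resolventRHS_congr hkK (triangleExtend_eqOn hT hR'c) hp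
        _ = triangleExtend hT hR'c p := (hR' _ hp).symm
    intro q hq
    rw [← hρ_unique _ hR'_fixed, triangleExtend_eqOn hT hR'c hq]

theorem integral_resolvent_mul_eq_integral_kernel_mul_of_continuous {κ θ : ℝ → ℝ}
    {r : ℝ × ℝ → ℝ} (hκ : Continuous κ) (hr : Continuous r) (hθ : Continuous θ) {s T : ℝ}
    (hsT : s ≤ T) (hres : ∀ τ ∈ Icc s T, r (s, τ) = κ τ + ∫ η in s..τ, κ η * r (η, τ)) :
    ∫ τ in s..T, r (s, τ) * θ τ = ∫ τ in s..T, κ τ * (θ τ + ∫ x in τ..T, r (τ, x) * θ x) := by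
  have hinner : Continuous fun τ => ∫ x in τ..T, r (τ, x) * θ x :=
    continuous_intervalIntegral_of_continuous (by fun_prop) continuous_id continuous_const
  have hiterated : Continuous fun τ => ∫ η in s..τ, κ η * r (η, τ) * θ τ :=
    continuous_intervalIntegral_of_continuous (by fun_prop) continuous_const continuous_id
  calc ∫ τ in s..T, r (s, τ) * θ τ
      = ∫ τ in s..T, (κ τ * θ τ + ∫ η in s..τ, κ η * r (η, τ) * θ τ) := by
        refine integral_congr fun τ hτ => ?_
        rw [uIcc_of_le hsT] at hτ
        simp only [hres τ hτ, intervalIntegral.integral_mul_const, add_mul]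
    _ = (∫ τ in s..T, κ τ * θ τ) + ∫ τ in s..T, ∫ η in s..τ, κ η * r (η, τ) * θ τ :=
        integral_add ((hκ.mul hθ).intervalIntegrable _ _) (hiterated.intervalIntegrable _ _)
    _ = (∫ τ in s..T, κ τ * θ τ) + ∫ η in s..T, κ η * ∫ τ in η..T, r (η, τ) * θ τ := by
        rw [integral_integral_triangle_swap (G := fun η τ => κ η * r (η, τ) * θ τ)
          (by fun_prop) hsT]
        simp only [mul_assoc, intervalIntegral.integral_const_mul]
    _ = ∫ τ in s..T, κ τ * (θ τ + ∫ x in τ..T, r (τ, x) * θ x) := by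
        simp only [mul_add]
        exact (integral_add ((hκ.mul hθ).intervalIntegrable _ _)
          ((hκ.mul hinner).intervalIntegrable _ _)).symm

section Solution

variable {T : ℝ} {R : ℝ × ℝ → ℝ} {Θ : ℝ → ℝ}

theorem continuousOn_add_integral_resolvent (hT : 0 ≤ T) (hR : Continuous R)
    (hΘ : ContinuousOn Θ (Icc 0 T)) :
    ContinuousOn (fun s => Θ s + ∫ τ in s..T, R (s, τ) * Θ τ) (Icc 0 T) := by
  obtain ⟨θ, hθc, hθ⟩ := exists_continuous_eqOn_Icc hT hΘ
  have hcont : Continuous fun s => θ s + ∫ τ in s..T, R (s, τ) * θ τ :=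
    hθc.add (continuous_intervalIntegral_of_continuous (by fun_prop) continuous_id continuous_const)
  refine hcont.continuousOn.congr fun s hs => ?_
  simp only [hθ hs, integral_mul_congr_of_eqOn hθ hs]

theorem integral_resolvent_mul_eq_integral_kernel_mul (hT : 0 ≤ T) {K : ℝ × ℝ → ℝ}
    (hK : ContinuousOn K (volterraTriangle T)) (hR : Continuous R)
    (hRK : ∀ q ∈ volterraTriangle T, R q = resolventRHS K R q) (hΘ : ContinuousOn Θ (Icc 0 T))
    {s : ℝ} (hs : s ∈ Icc 0 T) :
    ∫ τ in s..T, R (s, τ) * Θ τ =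
      ∫ τ in s..T, K (s, τ) * (Θ τ + ∫ x in τ..T, R (τ, x) * Θ x) := by
  obtain ⟨θ, hθc, hθ⟩ := exists_continuous_eqOn_Icc hT hΘ
  have hkK := triangleExtend_eqOn hT hK
  have hres : ∀ τ ∈ Icc s T, R (s, τ) = triangleExtend hT hK (s, τ) +
      ∫ η in s..τ, triangleExtend hT hK (s, η) * R (η, τ) := fun τ hτ =>
    have hsτ : (s, τ) ∈ volterraTriangle T := ⟨hs.1, hτ⟩
    (hRK _ hsτ).trans (resolventRHS_congr hkK.symm (fun _ _ => rfl) hsτ)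
  rw [← integral_mul_congr_of_eqOn hθ hs,
    integral_resolvent_mul_eq_integral_kernel_mul_of_continuous (by fun_prop) hR hθc hs.2 hres]
  refine integral_congr fun τ hτ => ?_
  rw [uIcc_of_le hs.2] at hτ
  have hτ' : τ ∈ Icc 0 T := ⟨hs.1.trans hτ.1, hτ.2⟩
  simp only [hkK (x := (s, τ)) ⟨hs.1, hτ⟩, hθ hτ', integral_mul_congr_of_eqOn hθ hτ']

end Solution

/-- For every `T > 0` and continuous `K : Δ_T → ℝ` there exists a unique
continuous resolvent kernel `R : Δ_T → ℝ` satisfying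
`R(s,τ) = K(s,τ) + ∫_s^τ K(s,η) R(η,τ) dη` on `Δ_T`; moreover for every continuous
`Θ : [0,T] → ℝ` the function `A(s) := Θ(s) + ∫_s^T R(s,τ) Θ(τ) dτ` is continuous and solves
the Volterra equation `A(s) = Θ(s) + ∫_s^T K(s,τ) A(τ) dτ` on `[0,T]`. -/
theorem volterra_resolvent_kernel
    (T : ℝ) (hT : 0 < T)
    (K : ℝ × ℝ → ℝ)
    (hK : ContinuousOn K {p : ℝ × ℝ | 0 ≤ p.1 ∧ p.1 ≤ p.2 ∧ p.2 ≤ T}) :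
    ∃ R : ℝ × ℝ → ℝ,
      (ContinuousOn R {p : ℝ × ℝ | 0 ≤ p.1 ∧ p.1 ≤ p.2 ∧ p.2 ≤ T} ∧
        ∀ s τ : ℝ, 0 ≤ s → s ≤ τ → τ ≤ T →
          R (s, τ) = K (s, τ) + ∫ η in s..τ, K (s, η) * R (η, τ)) ∧
      (∀ R' : ℝ × ℝ → ℝ,
        (ContinuousOn R' {p : ℝ × ℝ | 0 ≤ p.1 ∧ p.1 ≤ p.2 ∧ p.2 ≤ T} ∧
          ∀ s τ : ℝ, 0 ≤ s → s ≤ τ → τ ≤ T →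
            R' (s, τ) = K (s, τ) + ∫ η in s..τ, K (s, η) * R' (η, τ)) →
        EqOn R R' {p : ℝ × ℝ | 0 ≤ p.1 ∧ p.1 ≤ p.2 ∧ p.2 ≤ T}) ∧
      ∀ Θ : ℝ → ℝ, ContinuousOn Θ (Icc 0 T) →
        ContinuousOn (fun s => Θ s + ∫ τ in s..T, R (s, τ) * Θ τ) (Icc 0 T) ∧
        ∀ s ∈ Icc (0:ℝ) T,
          Θ s + ∫ τ in s..T, R (s, τ) * Θ τ =
            Θ s + ∫ τ in s..T, K (s, τ) * (Θ τ + ∫ x in τ..T, R (τ, x) * Θ x) := by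
  obtain ⟨R, hRc, hR, hR_unique⟩ := exists_resolvent_kernel hT.le hK
  refine ⟨R, ⟨hRc.continuousOn, fun s τ h0s hsτ hτT => hR (s, τ) ⟨h0s, hsτ, hτT⟩⟩,
    fun R' ⟨hR'c, hR'⟩ => hR_unique R' hR'c fun q ⟨h0s, hsτ, hτT⟩ => hR' q.1 q.2 h0s hsτ hτT,
    fun Θ hΘ => ⟨continuousOn_add_integral_resolvent hT.le hRc hΘ, fun s hs => ?_⟩⟩
  rw [integral_resolvent_mul_eq_integral_kernel_mul hT.le hK hRc hR hΘ hs]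
end

section
/- For every Lebesgue-measurable function v : [0,T] → [0,∞) with v(s)² ≤ a(s) for all s ∈ [0,T], and every Lebesgue-measurable function Z : [0,T] → ℝ, the estimate (∫_0^T v(s)·|Z(s)| ds)² ≤ (1/β) · ∫_0^T Z(s)²·e^{β A(s)} ds holds, where both sides are interpreted as values in [0,∞]. -/
/-!
Writing `v |Z| = (v e^{-βA/2}) (|Z| e^{βA/2})`, Cauchy–Schwarz reduces the estimate to
`∫₀ᵀ v² e^{-βA} ≤ ∫₀ᵀ a e^{-βA} ≤ 1/β`. Morally `∫₀ᵀ a e^{-βA} = (1 - e^{-βA(T)})/β`, but `A` is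
only absolutely continuous, so instead write `e^{-βA(s)} = ∫_{A(s)}^∞ β e^{-βu} du` and swap the
integrals: for each level `u` the `a`-mass of `{A < u}` is at most `u`, and
`∫₀^∞ β u e^{-βu} du = 1/β`.
-/

open MeasureTheory Set Real ENNReal

theorem lintegral_Ioi_exp_neg_mul {β : ℝ} (hβ : 0 < β) (c : ℝ) :
    ∫⁻ u in Ioi c, ENNReal.ofReal (β * exp (-(β * u))) = ENNReal.ofReal (exp (-(β * c))) := by
  have hint : IntegrableOn (fun u => β * exp (-β * u)) (Ioi c) :=
    (exp_neg_integrableOn_Ioi c hβ).const_mul β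
  simp_rw [← neg_mul]
  rw [← ofReal_integral_eq_lintegral_ofReal hint (.of_forall fun u => by positivity),
    integral_const_mul, integral_exp_mul_Ioi (neg_lt_zero.2 hβ)]
  field_simp

theorem lintegral_Ioi_mul_exp_neg_mul {β : ℝ} (hβ : 0 < β) :
    ∫⁻ u in Ioi 0, ENNReal.ofReal (β * exp (-(β * u))) * ENNReal.ofReal u =
      ENNReal.ofReal (1 / β) := by
  have hGamma : ∫ u in Ioi (0:ℝ), u ^ ((2:ℝ) - 1) * exp (-(β * u)) = (1 / β) ^ (2:ℝ) * Gamma 2 :=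
    integral_rpow_mul_exp_neg_mul_Ioi two_pos hβ
  have hint : IntegrableOn (fun u : ℝ => u ^ (1:ℝ) * exp (-β * u ^ (1:ℝ))) (Ioi 0) :=
    integrableOn_rpow_mul_exp_neg_mul_rpow (by norm_num) one_pos hβ
  norm_num [Gamma_two] at hGamma hint
  calc ∫⁻ u in Ioi 0, ENNReal.ofReal (β * exp (-(β * u))) * ENNReal.ofReal u
      = ∫⁻ u in Ioi 0, ENNReal.ofReal (β * (u * exp (-(β * u)))) := by
        refine setLIntegral_congr_fun measurableSet_Ioi fun u _ => ?_
        rw [← ENNReal.ofReal_mul (by positivity)]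
        ring_nf
    _ = ENNReal.ofReal (1 / β) := by
        rw [← ofReal_integral_eq_lintegral_ofReal (hint.const_mul β) ?_, integral_const_mul,
          hGamma]
        · congr 1; field_simp
        · filter_upwards [ae_restrict_mem measurableSet_Ioi] with u hu
          exact mul_nonneg hβ.le (mul_nonneg (le_of_lt hu) (exp_pos _).le)

section Primitive

variable {a : ℝ → ℝ} {T : ℝ}

theorem continuousOn_primitive_Icc (ha_int : IntegrableOn a (Icc 0 T)) :
    ContinuousOn (fun s => ∫ r in (0:ℝ)..s, a r) (Icc 0 T) :=
  (intervalIntegral.continuousOn_primitive ha_int).congr fun _ hs =>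
    intervalIntegral.integral_of_le hs.1

theorem setLIntegral_sublevel_primitive_le (ha_nonneg : ∀ s ∈ Icc 0 T, 0 ≤ a s)
    (ha_int : IntegrableOn a (Icc 0 T)) (u : ℝ) :
    ∫⁻ s in {s | ∫ r in (0:ℝ)..s, a r < u} ∩ Icc 0 T, ENNReal.ofReal (a s) ≤
      ENNReal.ofReal u := by
  set A := fun s => ∫ r in (0:ℝ)..s, a r
  set E := {s | A s < u} ∩ Icc 0 T
  rcases E.eq_empty_or_nonempty with hE | hE
  · simp [hE]
  have hE_bdd : BddAbove E := ⟨T, fun s hs => hs.2.2⟩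
  set c := sSup E
  have hc : c ∈ Icc 0 T :=
    ⟨hE.elim fun s hs => hs.2.1.trans (le_csSup hE_bdd hs), csSup_le hE fun s hs => hs.2.2⟩
  have hAc : A c ≤ u :=
    ContinuousWithinAt.closure_le (csSup_mem_closure hE hE_bdd)
      ((continuousOn_primitive_Icc ha_int c hc).mono inter_subset_right)
      continuousWithinAt_const fun s hs => hs.1.le
  have hIcc_sub : Icc 0 c ⊆ Icc 0 T := Icc_subset_Icc le_rfl hc.2
  calc ∫⁻ s in E, ENNReal.ofReal (a s)
      ≤ ∫⁻ s in Icc 0 c, ENNReal.ofReal (a s) :=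
        lintegral_mono_set fun s hs => ⟨hs.2.1, le_csSup hE_bdd hs⟩
    _ = ENNReal.ofReal (A c) := by
        rw [← ofReal_integral_eq_lintegral_ofReal (ha_int.mono_set hIcc_sub)
          ((ae_restrict_iff' measurableSet_Icc).2 (.of_forall fun s hs =>
            ha_nonneg s (hIcc_sub hs))),
          integral_Icc_eq_integral_Ioc, ← intervalIntegral.integral_of_le hc.1]
    _ ≤ ENNReal.ofReal u := ENNReal.ofReal_le_ofReal hAc

theorem lintegral_mul_exp_neg_primitive_le {β : ℝ} (hβ : 0 < β)
    (ha_nonneg : ∀ s ∈ Icc 0 T, 0 ≤ a s) (ha_int : IntegrableOn a (Icc 0 T)) :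
    ∫⁻ s in Icc 0 T, ENNReal.ofReal (a s * exp (-(β * ∫ r in (0:ℝ)..s, a r))) ≤
      ENNReal.ofReal (1 / β) := by
  set A := fun s => ∫ r in (0:ℝ)..s, a r
  set g := fun u => ENNReal.ofReal (β * exp (-(β * u)))
  have hA_meas : AEMeasurable A (volume.restrict (Icc 0 T)) :=
    (continuousOn_primitive_Icc ha_int).aemeasurable measurableSet_Icc
  set K := {p : ℝ × ℝ | A p.1 < p.2}.indicator fun p => ENNReal.ofReal (a p.1) * g p.2
  have hg : Measurable g := by fun_prop
  have hK : AEMeasurable K ((volume.restrict (Icc 0 T)).prod (volume.restrict (Ioi 0))) :=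
    (ha_int.aemeasurable.ennreal_ofReal.comp_fst.mul
      (hg.comp measurable_snd).aemeasurable).indicator₀ (nullMeasurableSet_lt hA_meas.comp_fst measurable_snd.aemeasurable)
  calc ∫⁻ s in Icc 0 T, ENNReal.ofReal (a s * exp (-(β * A s)))
      = ∫⁻ s in Icc 0 T, ∫⁻ u in Ioi 0, K (s, u) := by
        refine setLIntegral_congr_fun measurableSet_Icc fun s hs => ?_
        have hA : 0 ≤ A s := intervalIntegral.integral_nonneg hs.1 fun r hr =>
          ha_nonneg r ⟨hr.1, hr.2.trans hs.2⟩
        have hfiber : (fun u => K (s, u)) =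
            (Ioi (A s)).indicator fun u => ENNReal.ofReal (a s) * g u := by
          ext u; simp [K, indicator_apply]
        rw [hfiber, lintegral_indicator measurableSet_Ioi,
          Measure.restrict_restrict measurableSet_Ioi, Ioi_inter_Ioi, sup_eq_left.2 hA,
          lintegral_const_mul' _ _ ofReal_ne_top,
          lintegral_Ioi_exp_neg_mul hβ, ← ENNReal.ofReal_mul (ha_nonneg s hs)]
    _ = ∫⁻ u in Ioi 0, ∫⁻ s in Icc 0 T, K (s, u) := lintegral_lintegral_swap hK
    _ ≤ ∫⁻ u in Ioi 0, g u * ENNReal.ofReal u := by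
        refine lintegral_mono fun u => ?_
        have hfiber : (fun s => K (s, u)) =
            {s | A s < u}.indicator fun s => g u * ENNReal.ofReal (a s) := by
          ext s; simp [K, indicator_apply, mul_comm]
        have hsub : NullMeasurableSet {s | A s < u} (volume.restrict (Icc 0 T)) :=
          nullMeasurableSet_lt hA_meas aemeasurable_const
        rw [hfiber, lintegral_indicator₀ hsub, Measure.restrict_restrict₀ hsub,
          lintegral_const_mul' _ _ ofReal_ne_top]
        gcongr
        exact setLIntegral_sublevel_primitive_le ha_nonneg ha_int u
    _ = ENNReal.ofReal (1 / β) := lintegral_Ioi_mul_exp_neg_mul hβ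

end Primitive

section CauchySchwarz

variable {α : Type*} [MeasurableSpace α] {μ : Measure α}

theorem ENNReal.sq_lintegral_mul_le {f g : α → ℝ≥0∞} (hf : AEMeasurable f μ)
    (hg : AEMeasurable g μ) :
    (∫⁻ x, f x * g x ∂μ) ^ 2 ≤ (∫⁻ x, f x ^ 2 ∂μ) * ∫⁻ x, g x ^ 2 ∂μ := by
  have hsq : ∀ y : ℝ≥0∞, (y ^ (1 / 2 : ℝ)) ^ 2 = y := fun y => by
    rw [← ENNReal.rpow_natCast, ← ENNReal.rpow_mul]; norm_num
  have := ENNReal.lintegral_mul_le_Lp_mul_Lq μ .two_two hf hg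
  simp only [Pi.mul_apply, ENNReal.rpow_two] at this
  calc (∫⁻ x, f x * g x ∂μ) ^ 2
      ≤ ((∫⁻ x, f x ^ 2 ∂μ) ^ (1 / 2 : ℝ) * (∫⁻ x, g x ^ 2 ∂μ) ^ (1 / 2 : ℝ)) ^ 2 := by
        gcongr
    _ = (∫⁻ x, f x ^ 2 ∂μ) * ∫⁻ x, g x ^ 2 ∂μ := by rw [mul_pow, hsq, hsq]

theorem sq_lintegral_ofReal_mul_le_weighted {f g h : α → ℝ} (hf : AEMeasurable f μ)
    (hg : AEMeasurable g μ) (hh : AEMeasurable h μ) :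
    (∫⁻ x, ENNReal.ofReal (f x * g x) ∂μ) ^ 2 ≤
      (∫⁻ x, ENNReal.ofReal (f x ^ 2 * exp (-h x)) ∂μ) *
        ∫⁻ x, ENNReal.ofReal (g x ^ 2 * exp (h x)) ∂μ := by
  set F := fun x => ENNReal.ofReal (|f x| * exp (-h x / 2))
  set G := fun x => ENNReal.ofReal (|g x| * exp (h x / 2))
  have hexp : ∀ y : ℝ, exp (y / 2) ^ 2 = exp y := fun y => by
    rw [← exp_nat_mul]; ring_nf
  have hF : ∀ x, F x ^ 2 = ENNReal.ofReal (f x ^ 2 * exp (-h x)) := fun x => by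
    rw [← ENNReal.ofReal_pow (by positivity), mul_pow, sq_abs, hexp]
  have hG : ∀ x, G x ^ 2 = ENNReal.ofReal (g x ^ 2 * exp (h x)) := fun x => by
    rw [← ENNReal.ofReal_pow (by positivity), mul_pow, sq_abs, hexp]
  calc (∫⁻ x, ENNReal.ofReal (f x * g x) ∂μ) ^ 2
      ≤ (∫⁻ x, F x * G x ∂μ) ^ 2 := by
        gcongr with x
        rw [← ENNReal.ofReal_mul (by positivity)]
        refine ENNReal.ofReal_le_ofReal ?_
        have hcancel : exp (-h x / 2) * exp (h x / 2) = 1 := by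
          rw [← exp_add, neg_div, neg_add_cancel, exp_zero]
        calc f x * g x ≤ |f x| * |g x| := abs_mul (f x) (g x) ▸ le_abs_self _
          _ = _ := by linear_combination (-(|f x| * |g x|)) * hcancel
    _ ≤ (∫⁻ x, F x ^ 2 ∂μ) * ∫⁻ x, G x ^ 2 ∂μ :=
        ENNReal.sq_lintegral_mul_le (by fun_prop) (by fun_prop)
    _ = _ := by simp only [hF, hG]

end CauchySchwarz

theorem weighted_cauchy_schwarz_estimate_v_general
    (T β : ℝ) (hβ : 0 < β)
    (a : ℝ → ℝ)
    (ha_nonneg : ∀ s ∈ Icc (0:ℝ) T, 0 ≤ a s)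
    (ha_int : IntegrableOn a (Icc 0 T))
    (v : ℝ → ℝ) (hv_meas : Measurable v)
    (hv_le : ∀ s ∈ Icc (0:ℝ) T, v s ^ 2 ≤ a s)
    (Z : ℝ → ℝ) (hZ : Measurable Z) :
    (∫⁻ s in Icc (0:ℝ) T, ENNReal.ofReal (v s * |Z s|)) ^ 2 ≤
      ENNReal.ofReal (1 / β) *
        ∫⁻ s in Icc (0:ℝ) T,
          ENNReal.ofReal (Z s ^ 2 * Real.exp (β * ∫ r in (0:ℝ)..s, a r)) := by
  set A := fun s => ∫ r in (0:ℝ)..s, a r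
  have hA : AEMeasurable A (volume.restrict (Icc 0 T)) :=
    (continuousOn_primitive_Icc ha_int).aemeasurable measurableSet_Icc
  calc (∫⁻ s in Icc 0 T, ENNReal.ofReal (v s * |Z s|)) ^ 2
      ≤ (∫⁻ s in Icc 0 T, ENNReal.ofReal (v s ^ 2 * exp (-(β * A s)))) *
          ∫⁻ s in Icc 0 T, ENNReal.ofReal (Z s ^ 2 * exp (β * A s)) := by
        simpa only [sq_abs] using sq_lintegral_ofReal_mul_le_weighted hv_meas.aemeasurable
          hZ.abs.aemeasurable (hA.const_mul β)
    _ ≤ ENNReal.ofReal (1 / β) * ∫⁻ s in Icc 0 T, ENNReal.ofReal (Z s ^ 2 * exp (β * A s)) := by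
        gcongr
        calc _ ≤ ∫⁻ s in Icc 0 T, ENNReal.ofReal (a s * exp (-(β * A s))) :=
              setLIntegral_mono' measurableSet_Icc fun s hs =>
                ENNReal.ofReal_le_ofReal (mul_le_mul_of_nonneg_right (hv_le s hs) (exp_pos _).le)
          _ ≤ ENNReal.ofReal (1 / β) := lintegral_mul_exp_neg_primitive_le hβ ha_nonneg ha_int

/-- With `a : [0,T] → [0,∞)` Lebesgue integrable, `A(s) = ∫_0^s a(r) dr`
and `β > 0`, for every Lebesgue-measurable `v : [0,T] → [0,∞)` with `v(s)² ≤ a(s)` on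
`[0,T]` and every Lebesgue-measurable `Z : [0,T] → ℝ`, the estimate
`(∫_0^T v|Z|)² ≤ (1/β) ∫_0^T Z² e^{βA}` holds in `[0,∞]`. -/
theorem weighted_cauchy_schwarz_estimate_v
    (T β : ℝ) (hT : 0 < T) (hβ : 0 < β)
    (a : ℝ → ℝ)
    (ha_nonneg : ∀ s ∈ Icc (0:ℝ) T, 0 ≤ a s)
    (ha_int : IntegrableOn a (Icc 0 T))
    (v : ℝ → ℝ) (hv_meas : Measurable v)
    (hv_nonneg : ∀ s ∈ Icc (0:ℝ) T, 0 ≤ v s)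
    (hv_le : ∀ s ∈ Icc (0:ℝ) T, v s ^ 2 ≤ a s)
    (Z : ℝ → ℝ) (hZ : Measurable Z) :
    (∫⁻ s in Icc (0:ℝ) T, ENNReal.ofReal (v s * |Z s|)) ^ 2 ≤
      ENNReal.ofReal (1 / β) *
        ∫⁻ s in Icc (0:ℝ) T,
          ENNReal.ofReal (Z s ^ 2 * Real.exp (β * ∫ r in (0:ℝ)..s, a r)) :=
  weighted_cauchy_schwarz_estimate_v_general T β hβ a ha_nonneg ha_int v hv_meas hv_le Z hZ
end

section
/- For all b, σ, T > 0 one has 2e^{bT} − (1 + bT)² − 1 > 0, and the strict inequality 2b / ((1 − e^{−bT}) σ²) < 2 b³ T² e^{bT} / ( σ² ( 2e^{bT} − (1 + bT)² − 1 ) ) holds. -/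
/-!
With `x = b T`, the denominator `2eˣ − (1 + x)² − 1 = 2(eˣ − 1 − x − x²/2)` is positive, and since
`(1 − e⁻ˣ) eˣ = eˣ − 1` the threshold inequality reduces to `2(eˣ − 1 − x) < x² eˣ`, i.e.
`1 − x²/2 < (1 + x) e⁻ˣ`. The function `(1 + y) e⁻ʸ + y²/2` has derivative `y (1 − e⁻ʸ) > 0`
for `y > 0`, so it exceeds its value `1` at the origin.
-/

open Set

namespace Real

lemma one_add_add_sq_div_two_lt_exp {x : ℝ} (hx : 0 < x) : 1 + x + x ^ 2 / 2 < exp x := by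
  have h : 1 + x + x ^ 2 / 2 + x ^ 3 / 6 ≤ exp x := by
    simpa [Finset.sum_range_succ, Nat.factorial] using sum_le_exp_of_nonneg hx.le 4
  linarith [pow_pos hx 3]

lemma one_sub_sq_div_two_lt_one_add_mul_exp_neg {x : ℝ} (hx : 0 < x) :
    1 - x ^ 2 / 2 < (1 + x) * exp (-x) := by
  let g : ℝ → ℝ := fun y ↦ (1 + y) * exp (-y) + y ^ 2 / 2
  have hg' (y : ℝ) : HasDerivAt g (y * (1 - exp (-y))) y := by
    refine ((((hasDerivAt_id y).const_add 1).mul (hasDerivAt_neg y).exp).add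
      ((hasDerivAt_pow 2 y).div_const 2)).congr_deriv ?_
    simp only [id_eq, Nat.cast_ofNat]
    ring
  have hg : StrictMonoOn g (Ici 0) := by
    refine strictMonoOn_of_hasDerivWithinAt_pos (convex_Ici 0) (by fun_prop)
      (fun y _ ↦ (hg' y).hasDerivWithinAt) fun y hy ↦ ?_
    rw [interior_Ici] at hy
    exact mul_pos hy (sub_pos.2 (exp_lt_one_iff.2 (neg_lt_zero.2 hy)))
  have := hg self_mem_Ici hx.le hx
  simp only [g, add_zero, neg_zero, exp_zero, mul_one] at this
  linarith

lemma two_mul_exp_sub_one_add_sq_sub_one_pos {x : ℝ} (hx : 0 < x) :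
    0 < 2 * exp x - (1 + x) ^ 2 - 1 := by
  nlinarith [one_add_add_sq_div_two_lt_exp hx]

lemma two_mul_exp_sub_one_sub_lt {x : ℝ} (hx : 0 < x) :
    2 * (exp x - 1 - x) < x ^ 2 * exp x := by
  have h := mul_lt_mul_of_pos_right (one_sub_sq_div_two_lt_one_add_mul_exp_neg hx) (exp_pos x)
  rw [mul_assoc, ← exp_add, neg_add_cancel, exp_zero] at h
  linarith

lemma one_div_one_sub_exp_neg_lt {x : ℝ} (hx : 0 < x) :
    1 / (1 - exp (-x)) < x ^ 2 * exp x / (2 * exp x - (1 + x) ^ 2 - 1) := by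
  have h1 : 0 < 1 - exp (-x) := sub_pos.2 (exp_lt_one_iff.2 (neg_lt_zero.2 hx))
  have hexp : (1 - exp (-x)) * exp x = exp x - 1 := by
    rw [sub_mul, one_mul, ← exp_add, neg_add_cancel, exp_zero]
  rw [div_lt_div_iff₀ h1 (two_mul_exp_sub_one_add_sq_sub_one_pos hx), one_mul, mul_assoc,
    mul_comm (exp x), hexp]
  linarith [two_mul_exp_sub_one_sub_lt hx]

end Real

/-- For all `b, σ, T > 0` one has `2e^{bT} − (1 + bT)² − 1 > 0`, and the
CIR exponential-moment threshold is strictly smaller than Korn's explosion threshold: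
`2b/((1 − e^{−bT})σ²) < 2b³T²e^{bT}/(σ²(2e^{bT} − (1 + bT)² − 1))`. -/
theorem cir_threshold_lt_korn_threshold
    (b σ T : ℝ) (hb : 0 < b) (hσ : 0 < σ) (hT : 0 < T) :
    0 < 2 * Real.exp (b * T) - (1 + b * T) ^ 2 - 1 ∧
    2 * b / ((1 - Real.exp (-(b * T))) * σ ^ 2) <
      2 * b ^ 3 * T ^ 2 * Real.exp (b * T) /
        (σ ^ 2 * (2 * Real.exp (b * T) - (1 + b * T) ^ 2 - 1)) := by
  have hx : 0 < b * T := mul_pos hb hT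
  refine ⟨Real.two_mul_exp_sub_one_add_sq_sub_one_pos hx, ?_⟩
  calc 2 * b / ((1 - Real.exp (-(b * T))) * σ ^ 2)
      = 2 * b / σ ^ 2 * (1 / (1 - Real.exp (-(b * T)))) := by
        rw [mul_one_div, div_div, mul_comm (σ ^ 2)]
    _ < 2 * b / σ ^ 2 * ((b * T) ^ 2 * Real.exp (b * T) /
          (2 * Real.exp (b * T) - (1 + b * T) ^ 2 - 1)) :=
      mul_lt_mul_of_pos_left (Real.one_div_one_sub_exp_neg_lt hx) (by positivity)
    _ = 2 * b ^ 3 * T ^ 2 * Real.exp (b * T) /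
          (σ ^ 2 * (2 * Real.exp (b * T) - (1 + b * T) ^ 2 - 1)) := by
        rw [div_mul_div_comm]; ring
end
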